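/- arXiv:2404.10122 — 5 statements merged into one kernel-verified Lean document; each statement's English description precedes it below -/
import Mathlib

section
/- Let X be a set, F a nonempty finite set of functions X → ℝ, f* ∈ F, T ≥ 1 an integer, and x^(1),…,x^(T) ∈ X a fixed sequence. Let ε^(1),…,ε^(T) be independent standard Gaussian random variables (mean 0, variance 1) and set y^(t) := f*(x^(t)) + ε^(t). Let f̂ be any minimizer over f ∈ F of the empirical square loss ∑_{t=1}^{T} (f(x^(t)) − y^(t))² (a measurable selection of the empirical risk minimizer). Then for every δ ∈ (0,1), with probability at least 1 − δ, ∑_{t=1}^{T} (f̂(x^(t)) − f*(x^(t)))² ≤ 8·log(|F|/δ), where log denotes the natural logarithm. -/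
/-!
Expanding the squares in the ERM inequality against `f*` gives the basic inequality
`‖f̂ - f*‖² ≤ 2 ⟨f̂ - f*, ε⟩` (norms over the design points). For a fixed `f`, the linear form
`⟨f - f*, ε⟩` is sub-Gaussian with variance proxy `‖f - f*‖²`, so the event
`‖f - f*‖² ≤ 2 ⟨f - f*, ε⟩` has probability at most `exp (-‖f - f*‖² / 8)`. A union bound over
the functions with `‖f - f*‖² > 8 log (|F| / δ)` leaves a failure probability of at most `δ`.
-/

open MeasureTheory ProbabilityTheory

open scoped NNReal

lemma hasSubgaussianMGF_of_map_eq_gaussianReal {Ω : Type*} [MeasurableSpace Ω]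
    {P : Measure Ω} {X : Ω → ℝ} {v : ℝ≥0} (hX : P.map X = gaussianReal 0 v) :
    HasSubgaussianMGF X v P := by
  rw [← HasSubgaussianMGF.id_map_iff (aemeasurable_of_map_neZero (by rw [hX]; infer_instance)),
    hX]
  exact ⟨integrable_exp_mul_gaussianReal, fun t => by simp [mgf_id_gaussianReal]⟩

lemma one_sub_measureReal_compl_le {α : Type*} [MeasurableSpace α] (μ : Measure α)
    [IsProbabilityMeasure μ] (s : Set α) : 1 - μ.real sᶜ ≤ μ.real s := by
  have h := measureReal_union_le (μ := μ) s sᶜ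
  rw [Set.union_compl_self, probReal_univ] at h
  linarith

lemma sum_sq_sub_le_of_sum_sq_sub_add_le {ι : Type*} [Fintype ι] {a b e : ι → ℝ}
    (h : ∑ i, (a i - (b i + e i)) ^ 2 ≤ ∑ i, (b i - (b i + e i)) ^ 2) :
    ∑ i, (a i - b i) ^ 2 ≤ 2 * ∑ i, (a i - b i) * e i := by
  have hexpand : ∀ i, (a i - (b i + e i)) ^ 2
      = (a i - b i) ^ 2 - 2 * ((a i - b i) * e i) + (b i - (b i + e i)) ^ 2 :=
    fun i => by ring
  simp only [hexpand, Finset.sum_add_distrib, Finset.sum_sub_distrib, ← Finset.mul_sum] at h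
  linarith

section SubgaussianNoise

variable {Ω ι : Type*} [MeasurableSpace Ω] [Fintype ι] {P : Measure Ω} {ε : ι → Ω → ℝ}
  {v : ℝ≥0}

lemma measureReal_le_sum_mul_le (hIndep : iIndepFun ε P)
    (hε : ∀ i, HasSubgaussianMGF (ε i) v P) (a : ι → ℝ) {s : ℝ} (hs : 0 ≤ s) :
    P.real {ω | s ≤ ∑ i, a i * ε i ω} ≤ Real.exp (-s ^ 2 / (2 * (v * ∑ i, a i ^ 2))) := by
  have hIndep' : iIndepFun (fun i ω => a i * ε i ω) P :=
    hIndep.comp (fun i y => a i * y) fun i => measurable_const_mul (a i)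
  have hsum := HasSubgaussianMGF.sum_of_iIndepFun hIndep' (s := Finset.univ)
    fun i _ => (hε i).const_mul (a i)
  convert hsum.measure_ge_le hs using 4
  push_cast
  rw [Finset.mul_sum]
  exact Finset.sum_congr rfl fun i _ => mul_comm _ _

lemma measureReal_sum_sq_le_two_mul_sum_mul_le [IsFiniteMeasure P] (hIndep : iIndepFun ε P)
    (hε : ∀ i, HasSubgaussianMGF (ε i) v P) (a : ι → ℝ) {r : ℝ} (hr : 0 ≤ r) :
    P.real {ω | r < ∑ i, a i ^ 2 ∧ ∑ i, a i ^ 2 ≤ 2 * ∑ i, a i * ε i ω}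
      ≤ Real.exp (-r / (8 * v)) := by
  set A := ∑ i, a i ^ 2
  by_cases hrA : r < A
  · have hA : 0 < A := hr.trans_lt hrA
    calc _ ≤ P.real {ω | A / 2 ≤ ∑ i, a i * ε i ω} :=
          measureReal_mono fun ω hω => by simp only [Set.mem_ofPred_eq] at hω ⊢; linarith
      _ ≤ Real.exp (-(A / 2) ^ 2 / (2 * (v * A))) :=
          measureReal_le_sum_mul_le hIndep hε a (by positivity)
      _ = Real.exp (-A / (8 * v)) := by
          congr 1
          rcases eq_or_ne (v : ℝ) 0 with hv | hv
          · simp [hv]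
          · field_simp
            ring
      _ ≤ Real.exp (-r / (8 * v)) := by gcongr
  · simp only [hrA, false_and, Set.ofPred_false, measureReal_empty]
    positivity

end SubgaussianNoise

theorem erm_offline_guarantee_general {X Ω : Type*} [MeasurableSpace Ω]
    (P : Measure Ω) [IsProbabilityMeasure P]
    (F : Finset (X → ℝ))
    (fstar : X → ℝ) (hfstar : fstar ∈ F)
    (T : ℕ) (x : Fin T → X)
    (ε : Fin T → Ω → ℝ)
    (hIndep : iIndepFun ε P)
    (hGauss : ∀ t, Measure.map (ε t) P = gaussianReal 0 1)
    (fhat : Ω → (X → ℝ))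
    (hmem : ∀ ω, fhat ω ∈ F)
    (hERM : ∀ ω, ∀ f ∈ F,
      ∑ t, (fhat ω (x t) - (fstar (x t) + ε t ω)) ^ 2
        ≤ ∑ t, (f (x t) - (fstar (x t) + ε t ω)) ^ 2)
    (δ : ℝ) (hδ : δ ∈ Set.Ioo (0 : ℝ) 1) :
    1 - δ ≤
      (P {ω | ∑ t, (fhat ω (x t) - fstar (x t)) ^ 2
        ≤ 8 * Real.log (F.card / δ)}).toReal := by
  obtain ⟨hδ0, hδ1⟩ := hδ
  have hcard : (1 : ℝ) ≤ F.card := by exact_mod_cast Finset.card_pos.mpr ⟨fstar, hfstar⟩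
  set L := Real.log (F.card / δ)
  have hL : 0 ≤ L := Real.log_nonneg ((one_le_div hδ0).mpr (by linarith))
  have hexpL : Real.exp (-L) = δ / F.card := by
    rw [Real.exp_neg, Real.exp_log (by positivity), inv_div]
  have hnoise : ∀ t, HasSubgaussianMGF (ε t) 1 P := fun t =>
    hasSubgaussianMGF_of_map_eq_gaussianReal (by simpa using hGauss t)
  set bad : (X → ℝ) → Set Ω := fun f => {ω | 8 * L < ∑ t, (f (x t) - fstar (x t)) ^ 2 ∧
    ∑ t, (f (x t) - fstar (x t)) ^ 2 ≤ 2 * ∑ t, (f (x t) - fstar (x t)) * ε t ω}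
  have hcover : {ω | ∑ t, (fhat ω (x t) - fstar (x t)) ^ 2 ≤ 8 * L}ᶜ ⊆ ⋃ f ∈ F, bad f :=
    fun ω hω => Set.mem_biUnion (hmem ω)
      ⟨not_le.mp hω, sum_sq_sub_le_of_sum_sq_sub_add_le (hERM ω fstar hfstar)⟩
  have hbad : P.real (⋃ f ∈ F, bad f) ≤ δ := calc
    _ ≤ ∑ f ∈ F, P.real (bad f) := measureReal_biUnion_finset_le _ _
    _ ≤ ∑ _f ∈ F, δ / F.card := Finset.sum_le_sum fun f _ =>
      (measureReal_sum_sq_le_two_mul_sum_mul_le hIndep hnoise _ (by positivity)).trans_eq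
        (by rw [← hexpL]; congr 1; push_cast; ring)
    _ = δ := by rw [Finset.sum_const, nsmul_eq_mul]; field_simp
  change 1 - δ ≤ P.real _
  linarith [one_sub_measureReal_compl_le P {ω | ∑ t, (fhat ω (x t) - fstar (x t)) ^ 2 ≤ 8 * L},
    measureReal_mono hcover (measure_ne_top P _)]

/-- Fixed-design guarantee for empirical risk minimization in well-specified
square-loss regression with i.i.d. standard Gaussian noise: with probability at least `1 − δ`,
`∑_t (f̂(x^(t)) − f*(x^(t)))² ≤ 8 log(|F|/δ)`.  The rounds are indexed by `Fin T`, the noise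
variables `ε t` are independent with law `N(0,1)`, the outcomes are `y t = f*(x t) + ε t`, and
`f̂` is any (pointwise) minimizer over `F` of the empirical square loss. -/
theorem erm_offline_guarantee {X Ω : Type*} [MeasurableSpace Ω]
    (P : Measure Ω) [IsProbabilityMeasure P]
    (F : Finset (X → ℝ)) (hF : F.Nonempty)
    (fstar : X → ℝ) (hfstar : fstar ∈ F)
    (T : ℕ) (hT : 1 ≤ T) (x : Fin T → X)
    (ε : Fin T → Ω → ℝ)
    (hIndep : iIndepFun ε P)
    (hGauss : ∀ t, Measure.map (ε t) P = gaussianReal 0 1)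
    (fhat : Ω → (X → ℝ))
    (hmem : ∀ ω, fhat ω ∈ F)
    (hERM : ∀ ω, ∀ f ∈ F,
      ∑ t, (fhat ω (x t) - (fstar (x t) + ε t ω)) ^ 2
        ≤ ∑ t, (f (x t) - (fstar (x t) + ε t ω)) ^ 2)
    (δ : ℝ) (hδ : δ ∈ Set.Ioo (0 : ℝ) 1) :
    1 - δ ≤
      (P {ω | ∑ t, (fhat ω (x t) - fstar (x t)) ^ 2
        ≤ 8 * Real.log (F.card / δ)}).toReal :=
  erm_offline_guarantee_general P F fstar hfstar T x ε hIndep hGauss fhat hmem hERM δ hδ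
end

section
/- Let X be a set, (Y, 𝔉) a measurable space, and ν a σ-finite measure on Y. Let F be a nonempty finite set, where each f ∈ F assigns to every x ∈ X a measurable density f(·|x) : Y → [0,∞) with ∫ f(y|x) dν(y) = 1. For densities p, q on Y (with respect to ν) define the squared Hellinger distance H²(p,q) := (1/2) ∫ (√(p(y)) − √(q(y)))² dν(y). Fix f* ∈ F, an integer T ≥ 1, and covariates x^(1),…,x^(T) ∈ X, and let y^(1),…,y^(T) be independent random variables where y^(t) is distributed according to the probability measure on Y with density f*(·|x^(t)) with respect to ν. Let f̂ be any maximizer over f ∈ F of the likelihood ∏_{t=1}^{T} f(y^(t)|x^(t)) (a measurable selection of the maximum likelihood estimator). Then for every δ ∈ (0,1), with probability at least 1 − δ, ∑_{t=1}^{T} H²( f̂(·|x^(t)), f*(·|x^(t)) ) ≤ log(|F|/δ), where log denotes the natural logarithm. -/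
open MeasureTheory ProbabilityTheory

/-!
For a fixed `f ∈ F`, Markov's inequality for the square root of the likelihood ratio
`∏ₜ f(yₜ|xₜ) / f*(yₜ|xₜ)` bounds the probability that `f` is at least as likely as `f*` by
`∏ₜ E √(f/f*)(yₜ) = ∏ₜ (1 - H²ₜ) ≤ exp (-∑ₜ H²ₜ)`: independence splits the expectation, and each
factor is the Bhattacharyya affinity `∫ √(f f*) dν = 1 - H²`. A union bound over the `f` with
`∑ₜ H²ₜ > log (|F|/δ)` costs at most `δ`, and off that event the maximizer `f̂`, which is at least
as likely as `f*`, cannot be one of them.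
-/

open Real
open scoped ENNReal

section Hellinger

variable {Y : Type*} [MeasurableSpace Y] {ν : Measure Y} {p q : Y → ℝ}

structure IsDensity (ν : Measure Y) (p : Y → ℝ) : Prop where
  measurable : Measurable p
  nonneg : ∀ y, 0 ≤ p y
  integral_eq_one : ∫ y, p y ∂ν = 1

noncomputable def hellingerSq (ν : Measure Y) (p q : Y → ℝ) : ℝ :=
  (1 / 2) * ∫ y, (√(p y) - √(q y)) ^ 2 ∂ν

namespace IsDensity

theorem integrable (hp : IsDensity ν p) : Integrable p ν := by
  by_contra h
  simpa [integral_undef h] using hp.integral_eq_one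

theorem isProbabilityMeasure_withDensity (hp : IsDensity ν p) :
    IsProbabilityMeasure (ν.withDensity fun y => ENNReal.ofReal (p y)) := by
  constructor
  rw [withDensity_apply _ MeasurableSet.univ, Measure.restrict_univ,
    ← ofReal_integral_eq_lintegral_ofReal hp.integrable (ae_of_all _ hp.nonneg),
    hp.integral_eq_one, ENNReal.ofReal_one]

theorem integrable_sqrt_mul_sqrt (hp : IsDensity ν p) (hq : IsDensity ν q) :
    Integrable (fun y => √(p y) * √(q y)) ν := by
  refine ((hp.integrable.add hq.integrable).div_const 2).mono'
    (hp.measurable.sqrt.mul hq.measurable.sqrt).aestronglyMeasurable (ae_of_all _ fun y => ?_)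
  rw [Real.norm_of_nonneg (by positivity), Pi.add_apply]
  nlinarith [sq_nonneg (√(p y) - √(q y)), sq_sqrt (hp.nonneg y), sq_sqrt (hq.nonneg y)]

theorem integral_sqrt_mul_sqrt (hp : IsDensity ν p) (hq : IsDensity ν q) :
    ∫ y, √(p y) * √(q y) ∂ν = 1 - hellingerSq ν p q := by
  have hsq : (fun y => (√(p y) - √(q y)) ^ 2)
      = fun y => (p y + q y) - 2 * (√(p y) * √(q y)) := by
    funext y
    nlinarith [sq_sqrt (hp.nonneg y), sq_sqrt (hq.nonneg y)]
  have hpq : Integrable (fun y => p y + q y) ν := hp.integrable.add hq.integrable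
  rw [hellingerSq, hsq, integral_sub hpq
    ((hp.integrable_sqrt_mul_sqrt hq).const_mul 2), integral_add hp.integrable hq.integrable,
    integral_const_mul, hp.integral_eq_one, hq.integral_eq_one]
  ring

end IsDensity

end Hellinger

section LikelihoodRatio

variable {Ω Y : Type*} [MeasurableSpace Ω] [MeasurableSpace Y] {P : Measure Ω} {ν : Measure Y}

theorem lintegral_prod_eq_prod_lintegral_of_iIndepFun₀ {ι : Type*} (s : Finset ι)
    (X : ι → Ω → ℝ≥0∞) (hX : iIndepFun X P) (hXm : ∀ i, AEMeasurable (X i) P) :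
    ∫⁻ ω, ∏ i ∈ s, X i ω ∂P = ∏ i ∈ s, ∫⁻ ω, X i ω ∂P := by
  have hmk := lintegral_prod_eq_prod_lintegral_of_indepFun s (fun i => (hXm i).mk (X i))
    ((iIndepFun_congr fun i => (hXm i).ae_eq_mk).1 hX) fun i => (hXm i).measurable_mk
  have hprod : (fun ω => ∏ i ∈ s, X i ω) =ᵐ[P] fun ω => ∏ i ∈ s, (hXm i).mk (X i) ω := by
    filter_upwards [(Filter.eventually_all_finset s).2 fun i _ => (hXm i).ae_eq_mk] with ω hω
    exact Finset.prod_congr rfl hω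
  rw [lintegral_congr_ae hprod, hmk]
  exact Finset.prod_congr rfl fun i _ => (lintegral_congr_ae (hXm i).ae_eq_mk).symm

variable {Z : Ω → Y} {p q : Y → ℝ}

theorem aemeasurable_of_map_eq_withDensity (hq : IsDensity ν q)
    (hZ : P.map Z = ν.withDensity fun y => ENNReal.ofReal (q y)) : AEMeasurable Z P := by
  have := hq.isProbabilityMeasure_withDensity
  exact .of_map_ne_zero (hZ ▸ IsProbabilityMeasure.ne_zero _)

theorem ae_pos_of_map_eq_withDensity (hq : IsDensity ν q)
    (hZ : P.map Z = ν.withDensity fun y => ENNReal.ofReal (q y)) : ∀ᵐ ω ∂P, 0 < q (Z ω) := by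
  refine ae_of_ae_map (p := fun y => 0 < q y) (aemeasurable_of_map_eq_withDensity hq hZ) ?_
  rw [hZ, ae_withDensity_iff hq.measurable.ennreal_ofReal]
  exact ae_of_all _ fun y hy => ENNReal.ofReal_pos.1 (pos_iff_ne_zero.2 hy)


theorem lintegral_sqrt_div_sqrt_le_exp_neg_hellingerSq (hp : IsDensity ν p) (hq : IsDensity ν q)
    (hZ : P.map Z = ν.withDensity fun y => ENNReal.ofReal (q y)) :
    ∫⁻ ω, ENNReal.ofReal (√(p (Z ω)) / √(q (Z ω))) ∂P
      ≤ ENNReal.ofReal (exp (-hellingerSq ν p q)) := by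
  have hratio : Measurable fun y => ENNReal.ofReal (√(p y) / √(q y)) :=
    (hp.measurable.sqrt.div hq.measurable.sqrt).ennreal_ofReal
  have hmul : ∀ y, q y * (√(p y) / √(q y)) = √(p y) * √(q y) := fun y => by
    rcases eq_or_ne (√(q y)) 0 with h | h
    · simp [(sqrt_eq_zero (hq.nonneg y)).1 h]
    · rw [mul_div_assoc', div_eq_iff h, mul_assoc, mul_self_sqrt (hq.nonneg y), mul_comm]
  rw [← lintegral_map' hratio.aemeasurable (aemeasurable_of_map_eq_withDensity hq hZ), hZ,
    lintegral_withDensity_eq_lintegral_mul _ hq.measurable.ennreal_ofReal hratio]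
  calc ∫⁻ y, ENNReal.ofReal (q y) * ENNReal.ofReal (√(p y) / √(q y)) ∂ν
      = ∫⁻ y, ENNReal.ofReal (√(p y) * √(q y)) ∂ν := by
        simp_rw [← ENNReal.ofReal_mul (hq.nonneg _), hmul]
    _ = ENNReal.ofReal (1 - hellingerSq ν p q) := by
        rw [← hp.integral_sqrt_mul_sqrt hq, ofReal_integral_eq_lintegral_ofReal
          (hp.integrable_sqrt_mul_sqrt hq) (ae_of_all _ fun y => by positivity)]
    _ ≤ ENNReal.ofReal (exp (-hellingerSq ν p q)) :=
        ENNReal.ofReal_le_ofReal (by linarith [add_one_le_exp (-hellingerSq ν p q)])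

theorem one_le_prod_sqrt_div_sqrt {ι : Type*} (s : Finset ι) {a b : ι → ℝ}
    (ha : ∀ i ∈ s, 0 ≤ a i) (hb : ∀ i ∈ s, 0 < b i) (h : ∏ i ∈ s, b i ≤ ∏ i ∈ s, a i) :
    1 ≤ ∏ i ∈ s, √(a i) / √(b i) := by
  rw [Finset.prod_div_distrib, ← sqrt_prod s ha, ← sqrt_prod s fun i hi => (hb i hi).le,
    one_le_div (sqrt_pos.2 (Finset.prod_pos hb))]
  exact sqrt_le_sqrt h

theorem measure_prod_le_prod_le_exp_neg_sum_hellingerSq {ι : Type*} [Fintype ι]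
    {Z : ι → Ω → Y} (hZ : iIndepFun Z P) {p q : ι → Y → ℝ}
    (hp : ∀ i, IsDensity ν (p i)) (hq : ∀ i, IsDensity ν (q i))
    (hlaw : ∀ i, P.map (Z i) = ν.withDensity fun y => ENNReal.ofReal (q i y)) :
    P {ω | ∏ i, q i (Z i ω) ≤ ∏ i, p i (Z i ω)}
      ≤ ENNReal.ofReal (exp (-∑ i, hellingerSq ν (p i) (q i))) := by
  set ψ : ι → Y → ℝ≥0∞ := fun i y => ENNReal.ofReal (√(p i y) / √(q i y))
  have hψ : ∀ i, Measurable (ψ i) := fun i =>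
    ((hp i).measurable.sqrt.div (hq i).measurable.sqrt).ennreal_ofReal
  have hψZ : ∀ i, AEMeasurable (ψ i ∘ Z i) P := fun i =>
    (hψ i).comp_aemeasurable (aemeasurable_of_map_eq_withDensity (hq i) (hlaw i))
  have hsub : {ω | ∏ i, q i (Z i ω) ≤ ∏ i, p i (Z i ω)} ≤ᵐ[P] {ω | 1 ≤ ∏ i, ψ i (Z i ω)} := by
    filter_upwards [ae_all_iff.2 fun i => ae_pos_of_map_eq_withDensity (hq i) (hlaw i)]
      with ω hpos hle
    change 1 ≤ ∏ i, ψ i (Z i ω)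
    rw [← ENNReal.ofReal_prod_of_nonneg fun i _ => by positivity,
      ENNReal.one_le_ofReal]
    exact one_le_prod_sqrt_div_sqrt _ (fun i _ => (hp i).nonneg _) (fun i _ => hpos i) hle
  calc P {ω | ∏ i, q i (Z i ω) ≤ ∏ i, p i (Z i ω)}
      ≤ P {ω | 1 ≤ ∏ i, ψ i (Z i ω)} := measure_mono_ae hsub
    _ ≤ ∫⁻ ω, ∏ i, ψ i (Z i ω) ∂P := by
        simpa using mul_meas_ge_le_lintegral₀ (Finset.univ.aemeasurable_prod fun i _ => hψZ i) 1
    _ = ∏ i, ∫⁻ ω, ψ i (Z i ω) ∂P :=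
        lintegral_prod_eq_prod_lintegral_of_iIndepFun₀ _ _ (hZ.comp ψ hψ) hψZ
    _ ≤ ∏ i, ENNReal.ofReal (exp (-hellingerSq ν (p i) (q i))) := Finset.prod_le_prod' fun i _ =>
        lintegral_sqrt_div_sqrt_le_exp_neg_hellingerSq (hp i) (hq i) (hlaw i)
    _ = ENNReal.ofReal (exp (-∑ i, hellingerSq ν (p i) (q i))) := by
        rw [← ENNReal.ofReal_prod_of_nonneg fun i _ => (exp_pos _).le, ← Finset.sum_neg_distrib,
          exp_sum]

end LikelihoodRatio

section UnionBound

variable {Ω : Type*} [MeasurableSpace Ω] {P : Measure Ω}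

theorem measure_biUnion_filter_log_lt_le {α : Type*} (F : Finset α) (A : α → Set Ω) (L : α → ℝ)
    (hA : ∀ f ∈ F, P (A f) ≤ ENNReal.ofReal (exp (-L f))) {δ : ℝ} (hδ : 0 < δ) :
    P (⋃ f ∈ F.filter fun f => log (F.card / δ) < L f, A f) ≤ ENNReal.ofReal δ := by
  rcases F.eq_empty_or_nonempty with rfl | hF
  · simp
  have hcard : (0 : ℝ) < F.card := by exact_mod_cast hF.card_pos
  have hexp : ∀ f, log (F.card / δ) < L f → exp (-L f) ≤ δ / F.card := fun f hf => by
    rw [← inv_div, ← exp_log (div_pos hcard hδ), ← exp_neg]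
    exact exp_le_exp.2 (by linarith)
  calc P (⋃ f ∈ F.filter fun f => log (F.card / δ) < L f, A f)
      ≤ ∑ f ∈ F.filter fun f => log (F.card / δ) < L f, P (A f) := measure_biUnion_finset_le _ _
    _ ≤ ∑ f ∈ F, ENNReal.ofReal (δ / F.card) := by
        refine (Finset.sum_le_sum fun f hf => ?_).trans
          (Finset.sum_le_sum_of_subset (Finset.filter_subset _ F))
        obtain ⟨hfF, hfL⟩ := Finset.mem_filter.1 hf
        exact (hA f hfF).trans (ENNReal.ofReal_le_ofReal (hexp f hfL))
    _ = ENNReal.ofReal δ := by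
        rw [Finset.sum_const, nsmul_eq_mul, ← ENNReal.ofReal_natCast,
          ← ENNReal.ofReal_mul hcard.le, mul_div_cancel₀ _ hcard.ne']

theorem one_sub_le_toReal_measure_of_measure_compl_le [IsProbabilityMeasure P] {s : Set Ω}
    {δ : ℝ} (hδ : 0 ≤ δ) (h : P sᶜ ≤ ENNReal.ofReal δ) : 1 - δ ≤ (P s).toReal := by
  rw [← ENNReal.ofReal_le_iff_le_toReal (measure_ne_top _ _), ENNReal.ofReal_sub _ hδ,
    ENNReal.ofReal_one]
  calc 1 - ENNReal.ofReal δ ≤ 1 - P sᶜ := tsub_le_tsub_left h 1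
    _ ≤ P s := tsub_le_iff_right.2 (measure_univ (μ := P) ▸ measure_univ_le_add_compl s)

end UnionBound

theorem mle_offline_hellinger_guarantee_general {X Y Ω : Type*}
    [MeasurableSpace Y] [MeasurableSpace Ω]
    (P : Measure Ω) [IsProbabilityMeasure P]
    (ν : Measure Y)
    (F : Finset (X → Y → ℝ))
    (hmeas : ∀ f ∈ F, ∀ x, Measurable (f x))
    (hnonneg : ∀ f ∈ F, ∀ x y, 0 ≤ f x y)
    (hdens : ∀ f ∈ F, ∀ x, ∫ y, f x y ∂ν = 1)
    (fstar : X → Y → ℝ) (hfstar : fstar ∈ F)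
    (T : ℕ) (x : Fin T → X)
    (y : Fin T → Ω → Y)
    (hIndep : iIndepFun y P)
    (hlaw : ∀ t, Measure.map (y t) P
      = ν.withDensity (fun yy => ENNReal.ofReal (fstar (x t) yy)))
    (fhat : Ω → (X → Y → ℝ))
    (hmem : ∀ ω, fhat ω ∈ F)
    (hMLE : ∀ ω, ∀ f ∈ F, ∏ t, f (x t) (y t ω) ≤ ∏ t, fhat ω (x t) (y t ω))
    (δ : ℝ) (hδ : δ ∈ Set.Ioo (0 : ℝ) 1) :
    1 - δ ≤
      (P {ω | ∑ t, (1 / 2) * ∫ yy,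
          (Real.sqrt (fhat ω (x t) yy) - Real.sqrt (fstar (x t) yy)) ^ 2 ∂ν
        ≤ Real.log (F.card / δ)}).toReal := by
  have hdensity : ∀ f ∈ F, ∀ x, IsDensity ν (f x) := fun f hf x =>
    ⟨hmeas f hf x, hnonneg f hf x, hdens f hf x⟩
  have hA : ∀ f ∈ F, P {ω | ∏ t, fstar (x t) (y t ω) ≤ ∏ t, f (x t) (y t ω)}
      ≤ ENNReal.ofReal (exp (-∑ t, hellingerSq ν (f (x t)) (fstar (x t)))) := fun f hf =>
    measure_prod_le_prod_le_exp_neg_sum_hellingerSq hIndep (fun t => hdensity f hf (x t))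
      (fun t => hdensity fstar hfstar (x t)) hlaw
  refine one_sub_le_toReal_measure_of_measure_compl_le hδ.1.le
    ((measure_mono fun ω hω => ?_).trans (measure_biUnion_filter_log_lt_le F _ _ hA hδ.1))
  exact Set.mem_biUnion (Finset.mem_filter.2 ⟨hmem ω, not_le.1 hω⟩) (hMLE ω fstar hfstar)

/-- Fixed-design guarantee in squared Hellinger distance for maximum
likelihood estimation in well-specified conditional density estimation: with probability at
least `1 − δ`, `∑_t H²(f̂(·|x^(t)), f*(·|x^(t))) ≤ log(|F|/δ)`.  The rounds are indexed by
`Fin T`; each `f ∈ F` assigns to every `x` a density `f x : Y → ℝ` with respect to the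
σ-finite measure `ν`; the outcomes `y t` are independent with law `f*(·|x t)·ν`; `f̂` is any
(pointwise) maximizer over `F` of the likelihood; and the squared Hellinger distance between
densities `p, q` is `(1/2) ∫ (√p − √q)² dν`. -/
theorem mle_offline_hellinger_guarantee {X Y Ω : Type*}
    [MeasurableSpace Y] [MeasurableSpace Ω]
    (P : Measure Ω) [IsProbabilityMeasure P]
    (ν : Measure Y) [SigmaFinite ν]
    (F : Finset (X → Y → ℝ)) (hF : F.Nonempty)
    (hmeas : ∀ f ∈ F, ∀ x, Measurable (f x))
    (hnonneg : ∀ f ∈ F, ∀ x y, 0 ≤ f x y)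
    (hdens : ∀ f ∈ F, ∀ x, ∫ y, f x y ∂ν = 1)
    (fstar : X → Y → ℝ) (hfstar : fstar ∈ F)
    (T : ℕ) (hT : 1 ≤ T) (x : Fin T → X)
    (y : Fin T → Ω → Y)
    (hIndep : iIndepFun y P)
    (hlaw : ∀ t, Measure.map (y t) P
      = ν.withDensity (fun yy => ENNReal.ofReal (fstar (x t) yy)))
    (fhat : Ω → (X → Y → ℝ))
    (hmem : ∀ ω, fhat ω ∈ F)
    (hMLE : ∀ ω, ∀ f ∈ F, ∏ t, f (x t) (y t ω) ≤ ∏ t, fhat ω (x t) (y t ω))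
    (δ : ℝ) (hδ : δ ∈ Set.Ioo (0 : ℝ) 1) :
    1 - δ ≤
      (P {ω | ∑ t, (1 / 2) * ∫ yy,
          (Real.sqrt (fhat ω (x t) yy) - Real.sqrt (fstar (x t) yy)) ^ 2 ∂ν
        ≤ Real.log (F.card / δ)}).toReal :=
  mle_offline_hellinger_guarantee_general P ν F hmeas hnonneg hdens fstar hfstar T x y hIndep hlaw
    fhat hmem hMLE δ hδ
end

section
/- There exists a universal constant c > 0 with the following property. Let S be a finite nonempty set, let H ≥ 1 and T ≥ 1 be integers, let C ≥ 1 and β ≥ 0 be reals. For each t ∈ {1,…,T} and h ∈ {1,…,H}, let d_h^(t) : S → [0,1] satisfy ∑_{s ∈ S} d_h^(t)(s) = 1, and let δ_h^(t) : S → [0,1] be arbitrary. Assume: (coverability) there exist functions μ_1,…,μ_H : S → [0,1] with ∑_{s ∈ S} μ_h(s) = 1 and d_h^(t)(s) ≤ C·μ_h(s) for all t, h, s; and (offline guarantee) for every t ∈ {1,…,T}, ∑_{h=1}^{H} ∑_{s ∈ S} ( ∑_{τ=1}^{t−1} d_h^(τ)(s) ) · δ_h^(t)(s) ≤ β. Then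 ∑_{t=1}^{T} ∑_{h=1}^{H} ∑_{s ∈ S} d_h^(t)(s) · δ_h^(t)(s) ≤ c·( √( H·C·β·T·(1+log T) ) + H·C ), where log denotes the natural logarithm. -/
open Finset

private lemma sum_Icc_to_range (f : ℕ → ℝ) (T : ℕ) :
    ∑ t ∈ Finset.Icc 1 T, f t = ∑ i ∈ Finset.range T, f (i+1) := by
  rw [← Finset.Ico_add_one_right_eq_Icc, Finset.sum_Ico_eq_sum_range]
  simp [add_comm]

/-- Burn-in lemma. -/
private lemma burnin (a : ℕ → ℝ) (M : ℝ) (hM : 0 ≤ M) :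
    ∀ T : ℕ, (∀ t ∈ Finset.Icc 1 T, 0 ≤ a t ∧ a t ≤ M) →
    ∑ t ∈ Finset.Icc 1 T, (if (∑ τ ∈ Finset.Icc 1 (t-1), a τ) < M then a t else 0) ≤ 2*M := by
  intro T
  induction T with
  | zero =>
    intro _
    rw [show Finset.Icc 1 0 = ∅ from rfl, Finset.sum_empty]
    linarith
  | succ n ih =>
    intro hb
    have hb' : ∀ t ∈ Finset.Icc 1 n, 0 ≤ a t ∧ a t ≤ M := by
      intro t ht
      exact hb t (Finset.Icc_subset_Icc_right (Nat.le_succ n) ht)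
    rw [Finset.sum_Icc_succ_top (Nat.one_le_iff_ne_zero.mpr (Nat.succ_ne_zero n))]
    simp only [Nat.add_sub_cancel]
    by_cases hA : (∑ τ ∈ Finset.Icc 1 n, a τ) < M
    · have hall : ∀ t ∈ Finset.Icc 1 n,
          (if (∑ τ ∈ Finset.Icc 1 (t-1), a τ) < M then a t else 0) = a t := by
        intro t ht
        have ht' := Finset.mem_Icc.mp ht
        rw [if_pos]
        calc ∑ τ ∈ Finset.Icc 1 (t-1), a τ ≤ ∑ τ ∈ Finset.Icc 1 n, a τ := by
              apply Finset.sum_le_sum_of_subset_of_nonneg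
              · apply Finset.Icc_subset_Icc_right; omega
              · intro i hi _; exact (hb' i hi).1
          _ < M := hA
      rw [Finset.sum_congr rfl hall, if_pos hA]
      have h1 : a (n+1) ≤ M := (hb (n+1) (by simp)).2
      linarith
    · rw [if_neg hA, add_zero]
      exact ih hb'

/-- Log-telescoping lemma. -/
private lemma logsum (a : ℕ → ℝ) (M : ℝ) (hM : 0 ≤ M) (T : ℕ) (hT : 1 ≤ T)
    (hb : ∀ t ∈ Finset.Icc 1 T, 0 ≤ a t ∧ a t ≤ M) :
    ∑ t ∈ Finset.Icc 1 T,
      (if (∑ τ ∈ Finset.Icc 1 (t-1), a τ) < M then 0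
       else (a t)^2 / (∑ τ ∈ Finset.Icc 1 (t-1), a τ)) ≤ 2*M*Real.log T := by
  set A : ℕ → ℝ := fun t => ∑ τ ∈ Finset.Icc 1 (t-1), a τ with hA
  rcases eq_or_lt_of_le hM with hM0 | hMpos
  · -- M = 0 : every a t = 0 on the range
    have hz : ∀ t ∈ Finset.Icc 1 T,
        (if A t < M then 0 else (a t)^2 / A t) = 0 := by
      intro t ht
      have h0 : a t = 0 := le_antisymm (hM0 ▸ (hb t ht).2) (hb t ht).1
      split
      · rfl
      · rw [h0]; simp
    rw [Finset.sum_congr rfl hz]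
    have hlog : (0:ℝ) ≤ Real.log T := Real.log_natCast_nonneg T
    simp only [Finset.sum_const, smul_zero]
    positivity
  · -- M > 0
    set L : ℕ → ℝ := fun t => Real.log (max (A t) M) with hL
    have hAnonneg : ∀ t, t ≤ T+1 → 0 ≤ A t := by
      intro t ht
      apply Finset.sum_nonneg
      intro i hi
      simp only [Finset.mem_Icc] at hi
      exact (hb i (Finset.mem_Icc.mpr ⟨hi.1, by omega⟩)).1
    have hstep : ∀ t, 1 ≤ t → A (t+1) = A t + a t := by
      intro t h1
      obtain ⟨u, rfl⟩ : ∃ u, t = u + 1 := ⟨t-1, by omega⟩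
      show (∑ τ ∈ Finset.Icc 1 (u+1+1-1), a τ) = (∑ τ ∈ Finset.Icc 1 (u+1-1), a τ) + a (u+1)
      simp only [Nat.add_sub_cancel]
      exact Finset.sum_Icc_succ_top (by omega) a
    have hmono : ∀ t, 1 ≤ t → t ≤ T → L t ≤ L (t+1) := by
      intro t h1 h2
      apply Real.log_le_log (lt_of_lt_of_le hMpos (le_max_right _ _))
      apply max_le_max _ le_rfl
      rw [hstep t h1]
      have := (hb t (Finset.mem_Icc.mpr ⟨h1, h2⟩)).1
      linarith
    have hterm : ∀ t ∈ Finset.Icc 1 T,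
        (if A t < M then 0 else (a t)^2 / A t) ≤ 2*M*(L (t+1) - L t) := by
      intro t ht
      have ht' := Finset.mem_Icc.mp ht
      have ha := hb t ht
      by_cases hc : A t < M
      · rw [if_pos hc]
        have := hmono t ht'.1 ht'.2
        nlinarith
      · rw [if_neg hc]
        push_neg at hc
        have hApos : 0 < A t := lt_of_lt_of_le hMpos hc
        have hA1 : A (t+1) = A t + a t := hstep t ht'.1
        have hA1pos : 0 < A (t+1) := by rw [hA1]; linarith [ha.1]
        have hLt : L t = Real.log (A t) := by
          simp only [hL]; rw [max_eq_left hc]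
        have hLt1 : L (t+1) = Real.log (A (t+1)) := by
          simp only [hL]; rw [max_eq_left]
          rw [hA1]; linarith [ha.1]
        have key : a t / A (t+1) ≤ Real.log (A (t+1)) - Real.log (A t) := by
          have h3 := Real.log_le_sub_one_of_pos (show 0 < A t / A (t+1) by positivity)
          rw [Real.log_div (ne_of_gt hApos) (ne_of_gt hA1pos)] at h3
          have h4 : A t / A (t+1) - 1 = -(a t / A (t+1)) := by
            field_simp
            rw [hA1]; ring
          linarith
        have hq : (a t)^2 / A t ≤ 2*M * (a t / A (t+1)) := by
          rw [mul_div_assoc' (2*M), div_le_div_iff₀ hApos hA1pos]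
          have h5 : a t ≤ M := ha.2
          have h6 : 0 ≤ a t := ha.1
          rw [hA1]
          nlinarith [mul_nonneg h6 (mul_nonneg h6 (sub_nonneg.mpr hc)),
            mul_nonneg (mul_nonneg h6 hApos.le) (sub_nonneg.mpr h5),
            mul_nonneg h6 (mul_nonneg (sub_nonneg.mpr h5) hApos.le)]
        calc (a t)^2 / A t ≤ 2*M * (a t / A (t+1)) := hq
          _ ≤ 2*M*(L (t+1) - L t) := by
            rw [hLt, hLt1]
            exact mul_le_mul_of_nonneg_left key (by linarith)
    calc ∑ t ∈ Finset.Icc 1 T, (if A t < M then 0 else (a t)^2 / A t)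
        ≤ ∑ t ∈ Finset.Icc 1 T, 2*M*(L (t+1) - L t) := Finset.sum_le_sum hterm
      _ = 2*M*(L (T+1) - L 1) := by
          rw [← Finset.mul_sum]
          congr 1
          rw [sum_Icc_to_range (fun t => L (t+1) - L t) T]
          exact Finset.sum_range_sub (fun i => L (i+1)) T
      _ ≤ 2*M*Real.log T := by
          have hA1z : A 1 = 0 := by
            show (∑ τ ∈ Finset.Icc 1 0, a τ) = 0
            rfl
          have hL1 : L 1 = Real.log M := by
            simp only [hL, hA1z, max_eq_right hM]
          have hub : A (T+1) ≤ T * M := by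
            calc A (T+1) = ∑ τ ∈ Finset.Icc 1 T, a τ := by
                  simp only [hA, Nat.add_sub_cancel]
              _ ≤ ∑ τ ∈ Finset.Icc 1 T, M := Finset.sum_le_sum (fun i hi => (hb i hi).2)
              _ = T * M := by
                  rw [Finset.sum_const, Nat.card_Icc]
                  simp [Nat.add_sub_cancel]
          have hTpos : (0:ℝ) < T := by exact_mod_cast hT
          have hLT1 : L (T+1) ≤ Real.log (T*M) := by
            apply Real.log_le_log (lt_of_lt_of_le hMpos (le_max_right _ _))
            apply max_le hub
            have hT1 : (1:ℝ) ≤ T := by exact_mod_cast hT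
            nlinarith
          have hlogmul : Real.log ((T:ℝ)*M) = Real.log T + Real.log M :=
            Real.log_mul (ne_of_gt hTpos) (ne_of_gt hMpos)
          have : L (T+1) - L 1 ≤ Real.log T := by
            rw [hL1]; linarith
          exact mul_le_mul_of_nonneg_left this (by linarith)

/-- Offline-to-online conversion under coverability, in occupancy-measure
form: there is a universal constant `c > 0` such that for every finite nonempty state-action
set `S`, horizon `H`, number of rounds `T`, coverability constant `C ≥ 1` witnessed by
distributions `μ h`, occupancy measures `d t h` and `[0,1]`-valued losses `δ' t h` satisfying
the offline guarantee with parameter `β`, the cumulative online loss is at most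
`c(√(HCβT(1+log T)) + HC)`. -/
theorem coverability_offline_to_online :
    ∃ c : ℝ, 0 < c ∧
      ∀ (S : Type) (_ : Fintype S) (_ : Nonempty S),
      ∀ (H T : ℕ), 1 ≤ H → 1 ≤ T →
      ∀ (C β : ℝ), 1 ≤ C → 0 ≤ β →
      ∀ (d δ' : ℕ → ℕ → S → ℝ),
        (∀ t ∈ Finset.Icc 1 T, ∀ h ∈ Finset.Icc 1 H,
          (∀ s, d t h s ∈ Set.Icc (0 : ℝ) 1) ∧ ∑ s, d t h s = 1) →
        (∀ t ∈ Finset.Icc 1 T, ∀ h ∈ Finset.Icc 1 H, ∀ s, δ' t h s ∈ Set.Icc (0 : ℝ) 1) →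
      ∀ (μ : ℕ → S → ℝ),
        (∀ h ∈ Finset.Icc 1 H, (∀ s, μ h s ∈ Set.Icc (0 : ℝ) 1) ∧ ∑ s, μ h s = 1) →
        (∀ t ∈ Finset.Icc 1 T, ∀ h ∈ Finset.Icc 1 H, ∀ s, d t h s ≤ C * μ h s) →
        (∀ t ∈ Finset.Icc 1 T,
          ∑ h ∈ Finset.Icc 1 H, ∑ s,
            (∑ τ ∈ Finset.Icc 1 (t - 1), d τ h s) * δ' t h s ≤ β) →
        ∑ t ∈ Finset.Icc 1 T, ∑ h ∈ Finset.Icc 1 H, ∑ s, d t h s * δ' t h s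
          ≤ c * (Real.sqrt (H * C * β * T * (1 + Real.log T)) + H * C) := by
  refine ⟨2, by norm_num, ?_⟩
  intro S _ _ H T hH hT C β hC hβ d δ' hd hδ μ hμ hcov hoff
  -- notation
  set A : ℕ → ℕ → S → ℝ := fun t h s => ∑ τ ∈ Finset.Icc 1 (t-1), d τ h s with hAdef
  -- basic facts
  have hCpos : (0:ℝ) < C := lt_of_lt_of_le one_pos hC
  have hT1 : (1:ℝ) ≤ T := by exact_mod_cast hT
  have hμnn : ∀ h ∈ Finset.Icc 1 H, ∀ s, 0 ≤ μ h s := fun h hh s => ((hμ h hh).1 s).1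
  have hdnn : ∀ t ∈ Finset.Icc 1 T, ∀ h ∈ Finset.Icc 1 H, ∀ s, 0 ≤ d t h s :=
    fun t ht h hh s => ((hd t ht h hh).1 s).1
  have hbounds : ∀ h ∈ Finset.Icc 1 H, ∀ s, ∀ t ∈ Finset.Icc 1 T,
      0 ≤ d t h s ∧ d t h s ≤ C * μ h s := by
    intro h hh s t ht
    exact ⟨hdnn t ht h hh s, hcov t ht h hh s⟩
  have hAnn : ∀ t ∈ Finset.Icc 1 T, ∀ h ∈ Finset.Icc 1 H, ∀ s, 0 ≤ A t h s := by
    intro t ht h hh s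
    apply Finset.sum_nonneg
    intro τ hτ
    have hτ' := Finset.mem_Icc.mp hτ
    have ht' := Finset.mem_Icc.mp ht
    exact hdnn τ (Finset.mem_Icc.mpr ⟨hτ'.1, by omega⟩) h hh s
  have hswap : ∀ F : ℕ → ℕ → S → ℝ,
      ∑ t ∈ Finset.Icc 1 T, ∑ h ∈ Finset.Icc 1 H, ∑ s, F t h s
        = ∑ h ∈ Finset.Icc 1 H, ∑ s, ∑ t ∈ Finset.Icc 1 T, F t h s := by
    intro F
    rw [Finset.sum_comm]
    exact Finset.sum_congr rfl fun h _ => Finset.sum_comm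
  -- split into burn-in and good part
  set Burn : ℝ := ∑ t ∈ Finset.Icc 1 T, ∑ h ∈ Finset.Icc 1 H, ∑ s,
    (if A t h s < C * μ h s then d t h s * δ' t h s else 0) with hBdef
  set Good : ℝ := ∑ t ∈ Finset.Icc 1 T, ∑ h ∈ Finset.Icc 1 H, ∑ s,
    (if A t h s < C * μ h s then 0 else d t h s * δ' t h s) with hGdef
  have hBG : ∑ t ∈ Finset.Icc 1 T, ∑ h ∈ Finset.Icc 1 H, ∑ s, d t h s * δ' t h s
      = Burn + Good := by
    rw [hBdef, hGdef, ← Finset.sum_add_distrib]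
    apply Finset.sum_congr rfl; intro t _
    rw [← Finset.sum_add_distrib]
    apply Finset.sum_congr rfl; intro h _
    rw [← Finset.sum_add_distrib]
    apply Finset.sum_congr rfl; intro s _
    split <;> ring
  -- burn-in bound
  have hBurn : Burn ≤ 2 * (H * C) := by
    have step1 : Burn ≤ ∑ t ∈ Finset.Icc 1 T, ∑ h ∈ Finset.Icc 1 H, ∑ s,
        (if A t h s < C * μ h s then d t h s else 0) := by
      rw [hBdef]
      apply Finset.sum_le_sum; intro t ht
      apply Finset.sum_le_sum; intro h hh
      apply Finset.sum_le_sum; intro s _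
      have h1 := (hd t ht h hh).1 s
      have h2 := hδ t ht h hh s
      split
      · exact mul_le_of_le_one_right h1.1 h2.2
      · exact le_refl 0
    have step2 : ∑ t ∈ Finset.Icc 1 T, ∑ h ∈ Finset.Icc 1 H, ∑ s,
        (if A t h s < C * μ h s then d t h s else 0) ≤ 2 * (H * C) := by
      rw [hswap]
      calc ∑ h ∈ Finset.Icc 1 H, ∑ s, ∑ t ∈ Finset.Icc 1 T,
            (if A t h s < C * μ h s then d t h s else 0)
          ≤ ∑ h ∈ Finset.Icc 1 H, ∑ s, 2 * (C * μ h s) := by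
            apply Finset.sum_le_sum; intro h hh
            apply Finset.sum_le_sum; intro s _
            exact burnin (fun τ => d τ h s) (C * μ h s)
              (mul_nonneg hCpos.le (hμnn h hh s)) T (hbounds h hh s)
        _ = ∑ h ∈ Finset.Icc 1 H, 2 * C := by
            apply Finset.sum_congr rfl; intro h hh
            rw [← Finset.mul_sum, ← Finset.mul_sum, (hμ h hh).2, mul_one]
        _ = 2 * (H * C) := by
            rw [Finset.sum_const, Nat.card_Icc]
            simp only [Nat.add_sub_cancel, nsmul_eq_mul]
            ring
    linarith
  -- good part via Cauchy-Schwarz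
  set P : ℕ → ℕ → S → ℝ := fun t h s =>
    if A t h s < C * μ h s then 0 else d t h s / Real.sqrt (A t h s) with hPdef
  set Q : ℕ → ℕ → S → ℝ := fun t h s =>
    if A t h s < C * μ h s then 0 else Real.sqrt (A t h s) * δ' t h s with hQdef
  set I : Finset (ℕ × ℕ × S) :=
    (Finset.Icc 1 T) ×ˢ ((Finset.Icc 1 H) ×ˢ (Finset.univ : Finset S)) with hIdef
  have hprod : ∀ F : ℕ → ℕ → S → ℝ,
      ∑ x ∈ I, F x.1 x.2.1 x.2.2
        = ∑ t ∈ Finset.Icc 1 T, ∑ h ∈ Finset.Icc 1 H, ∑ s, F t h s := by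
    intro F
    rw [hIdef, Finset.sum_product]
    exact Finset.sum_congr rfl fun t _ => by rw [Finset.sum_product]
  have hGoodeq : Good = ∑ x ∈ I, P x.1 x.2.1 x.2.2 * Q x.1 x.2.1 x.2.2 := by
    rw [hprod fun t h s => P t h s * Q t h s, hGdef]
    apply Finset.sum_congr rfl; intro t ht
    apply Finset.sum_congr rfl; intro h hh
    apply Finset.sum_congr rfl; intro s _
    simp only [hPdef, hQdef]
    by_cases hc : A t h s < C * μ h s
    · rw [if_pos hc, if_pos hc, if_pos hc, mul_zero]
    · rw [if_neg hc, if_neg hc, if_neg hc]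
      push_neg at hc
      rcases eq_or_lt_of_le (hAnn t ht h hh s) with h0 | hpos
      · -- A = 0, hence d = 0
        have hd0 : d t h s = 0 := by
          have := hcov t ht h hh s
          have := hdnn t ht h hh s
          nlinarith
        rw [hd0]
        simp
      · have hs : Real.sqrt (A t h s) ≠ 0 := by
          positivity
        field_simp
  have hCS : ∑ x ∈ I, P x.1 x.2.1 x.2.2 * Q x.1 x.2.1 x.2.2
      ≤ Real.sqrt (∑ x ∈ I, (P x.1 x.2.1 x.2.2)^2)
        * Real.sqrt (∑ x ∈ I, (Q x.1 x.2.1 x.2.2)^2) :=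
    Real.sum_mul_le_sqrt_mul_sqrt I _ _
  have hp2 : ∑ x ∈ I, (P x.1 x.2.1 x.2.2)^2 ≤ 2 * (H * C) * Real.log T := by
    rw [hprod fun t h s => (P t h s)^2]
    have heq : ∀ t ∈ Finset.Icc 1 T, ∀ h ∈ Finset.Icc 1 H, ∀ s,
        (P t h s)^2 = (if A t h s < C * μ h s then 0 else (d t h s)^2 / A t h s) := by
      intro t ht h hh s
      simp only [hPdef]
      split
      · simp
      · rw [div_pow, Real.sq_sqrt (hAnn t ht h hh s)]
    calc ∑ t ∈ Finset.Icc 1 T, ∑ h ∈ Finset.Icc 1 H, ∑ s, (P t h s)^2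
        = ∑ t ∈ Finset.Icc 1 T, ∑ h ∈ Finset.Icc 1 H, ∑ s,
            (if A t h s < C * μ h s then 0 else (d t h s)^2 / A t h s) := by
          apply Finset.sum_congr rfl; intro t ht
          apply Finset.sum_congr rfl; intro h hh
          exact Finset.sum_congr rfl fun s _ => heq t ht h hh s
      _ = ∑ h ∈ Finset.Icc 1 H, ∑ s, ∑ t ∈ Finset.Icc 1 T,
            (if A t h s < C * μ h s then 0 else (d t h s)^2 / A t h s) := hswap _
      _ ≤ ∑ h ∈ Finset.Icc 1 H, ∑ s, 2 * (C * μ h s) * Real.log T := by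
          apply Finset.sum_le_sum; intro h hh
          apply Finset.sum_le_sum; intro s _
          exact logsum (fun τ => d τ h s) (C * μ h s)
            (mul_nonneg hCpos.le (hμnn h hh s)) T hT (hbounds h hh s)
      _ = ∑ h ∈ Finset.Icc 1 H, 2 * C * Real.log T := by
          apply Finset.sum_congr rfl; intro h hh
          have : ∀ s, 2 * (C * μ h s) * Real.log T = (2 * C * Real.log T) * μ h s := by
            intro s; ring
          rw [Finset.sum_congr rfl fun s _ => this s, ← Finset.mul_sum, (hμ h hh).2, mul_one]
      _ = 2 * (H * C) * Real.log T := by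
          rw [Finset.sum_const, Nat.card_Icc]
          simp only [Nat.add_sub_cancel, nsmul_eq_mul]
          ring
  have hq2 : ∑ x ∈ I, (Q x.1 x.2.1 x.2.2)^2 ≤ T * β := by
    rw [hprod fun t h s => (Q t h s)^2]
    calc ∑ t ∈ Finset.Icc 1 T, ∑ h ∈ Finset.Icc 1 H, ∑ s, (Q t h s)^2
        ≤ ∑ t ∈ Finset.Icc 1 T, ∑ h ∈ Finset.Icc 1 H, ∑ s, A t h s * δ' t h s := by
          apply Finset.sum_le_sum; intro t ht
          apply Finset.sum_le_sum; intro h hh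
          apply Finset.sum_le_sum; intro s _
          have hAnn' := hAnn t ht h hh s
          have hδ' := hδ t ht h hh s
          simp only [hQdef]
          split
          · norm_num
            exact mul_nonneg hAnn' hδ'.1
          · rw [mul_pow, Real.sq_sqrt hAnn']
            have : (δ' t h s)^2 ≤ δ' t h s := by nlinarith [hδ'.1, hδ'.2]
            nlinarith
      _ ≤ ∑ t ∈ Finset.Icc 1 T, β := Finset.sum_le_sum fun t ht => hoff t ht
      _ = T * β := by
          rw [Finset.sum_const, Nat.card_Icc]
          simp only [Nat.add_sub_cancel, nsmul_eq_mul]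
  -- conclude
  have hGood : Good ≤ 2 * Real.sqrt (H * C * β * T * (1 + Real.log T)) := by
    have hlogTnn : (0:ℝ) ≤ Real.log T := Real.log_natCast_nonneg T
    have hHC : (0:ℝ) ≤ (H:ℝ) * C := by positivity
    have h1 : Real.sqrt (∑ x ∈ I, (P x.1 x.2.1 x.2.2)^2)
        * Real.sqrt (∑ x ∈ I, (Q x.1 x.2.1 x.2.2)^2)
        ≤ Real.sqrt (2 * (H * C) * Real.log T) * Real.sqrt (T * β) := by
      apply mul_le_mul (Real.sqrt_le_sqrt hp2) (Real.sqrt_le_sqrt hq2)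
        (Real.sqrt_nonneg _) (Real.sqrt_nonneg _)
    have h2 : Real.sqrt (2 * (H * C) * Real.log T) * Real.sqrt (T * β)
        = Real.sqrt (2 * (H * C) * Real.log T * (T * β)) :=
      (Real.sqrt_mul (by positivity) _).symm
    have h3 : 2 * ((H:ℝ) * C) * Real.log T * (T * β)
        ≤ 4 * (H * C * β * T * (1 + Real.log T)) := by
      nlinarith [mul_nonneg (mul_nonneg hHC hβ) (by positivity : (0:ℝ) ≤ (T:ℝ))]
    have h4 : Real.sqrt (2 * ((H:ℝ) * C) * Real.log T * (T * β))
        ≤ Real.sqrt (4 * (H * C * β * T * (1 + Real.log T))) := Real.sqrt_le_sqrt h3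
    have h5 : Real.sqrt (4 * ((H:ℝ) * C * β * T * (1 + Real.log T)))
        = 2 * Real.sqrt (H * C * β * T * (1 + Real.log T)) := by
      rw [show (4:ℝ) = 2^2 by norm_num, Real.sqrt_mul (by positivity), Real.sqrt_sq (by norm_num)]
    calc Good ≤ _ := le_of_eq hGoodeq
      _ ≤ _ := hCS
      _ ≤ _ := h1
      _ = _ := h2
      _ ≤ _ := h4
      _ = _ := h5
  rw [hBG]
  have : (0:ℝ) ≤ Real.sqrt (H * C * β * T * (1 + Real.log T)) := Real.sqrt_nonneg _
  linarith
end

section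
/- There exists a universal constant c > 0 with the following property. Let S and A be finite nonempty sets, let d₁ be a probability distribution on S, let T ≥ 1 be an integer and β ≥ 0 a real. Let g* : S × A → [0,1] and ĝ^(1),…,ĝ^(T) : S × A → [0,1], and for each t ∈ {1,…,T} let π^(t) assign to each s ∈ S a probability distribution π^(t)(·|s) on A. Assume that for every t ∈ {1,…,T}, ∑_{τ=1}^{t−1} ∑_{s ∈ S} d₁(s) ∑_{a ∈ A} π^(τ)(a|s) · ( ĝ^(t)(s,a) − g*(s,a) )² ≤ β. Then ∑_{t=1}^{T} ∑_{s ∈ S} d₁(s) ∑_{a ∈ A} π^(t)(a|s) · ( ĝ^(t)(s,a) − g*(s,a) )² ≤ c·( √( |A|·T·β·(1+log T) ) + |A| ), where log denotes the natural logarithm. -/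
/-!
Write `μ(s, a) = d₁(s)` and `d_t(s, a) = d₁(s) π^(t)(a|s) ≤ μ(s, a)`, and let `D_t = d_1 + ⋯ + d_t`
be the cumulative visitation; `∑ μ = |A|` is the coverability coefficient. For each `(s, a)` the
rounds with `D_t ≤ 2μ` (burn-in) carry total weight at most `2μ`, hence error at most `2|A|`
overall. After burn-in `D_t ≤ 2 D_{t-1}`, and Cauchy–Schwarz splits `d_t e_t` into
`d_t² / D_{t-1}` and `D_{t-1} e_t`: the second sums to at most `Tβ` by the offline guarantee, the
first to at most `2|A| log T` because `d_t / D_t ≤ log D_t - log D_{t-1}` telescopes.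
-/

open Finset

section CumWeight

open Real

def cumWeight (d : ℕ → ℝ) (t : ℕ) : ℝ := ∑ τ ∈ Icc 1 t, d τ

lemma cumWeight_zero (d : ℕ → ℝ) : cumWeight d 0 = 0 := by
  simp [cumWeight]

lemma cumWeight_succ (d : ℕ → ℝ) (t : ℕ) : cumWeight d (t + 1) = cumWeight d t + d (t + 1) :=
  sum_Icc_succ_top (Nat.le_add_left 1 t) d

lemma cumWeight_sub_one_add (d : ℕ → ℝ) {t : ℕ} (ht : 1 ≤ t) :
    cumWeight d (t - 1) + d t = cumWeight d t := by
  obtain ⟨k, rfl⟩ := Nat.exists_eq_add_of_le' ht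
  rw [Nat.add_sub_cancel, cumWeight_succ]

variable {d : ℕ → ℝ} {T : ℕ} {c : ℝ}

lemma cumWeight_le_mul (hd : ∀ t ∈ Icc 1 T, d t ≤ c) : cumWeight d T ≤ T * c := by
  simpa [cumWeight] using sum_le_card_nsmul _ _ _ hd

lemma sum_filter_cumWeight_le (hd : ∀ t ∈ Icc 1 T, 0 ≤ d t) (hc : 0 ≤ c) :
    ∑ t ∈ Icc 1 T with cumWeight d t ≤ c, d t ≤ c := by
  induction T with
  | zero => simpa
  | succ T ih =>
    by_cases hT : cumWeight d (T + 1) ≤ c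
    · exact (sum_le_sum_of_subset_of_nonneg (filter_subset _ _) fun t ht _ => hd t ht).trans hT
    · rw [sum_filter, sum_Icc_succ_top (by omega), if_neg hT, add_zero, ← sum_filter]
      exact ih fun t ht => hd t (Icc_subset_Icc_right (by omega) ht)

lemma sub_div_le_log_sub_log {a b : ℝ} (ha : 0 < a) (hab : a ≤ b) :
    (b - a) / b ≤ log b - log a := by
  have hb : 0 < b := ha.trans_le hab
  have := one_sub_inv_le_log_of_pos (div_pos hb ha)
  rw [sub_div, div_self hb.ne']
  rwa [inv_div, log_div hb.ne' ha.ne'] at this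

lemma sum_filter_div_cumWeight_le (hd : ∀ t ∈ Icc 1 T, 0 ≤ d t) (hc : 0 < c) :
    ∑ t ∈ Icc 1 T with c ≤ cumWeight d (t - 1), d t / cumWeight d t
      ≤ log (max (cumWeight d T) c) - log c := by
  induction T with
  | zero => simp [cumWeight_zero, hc.le]
  | succ T ih =>
    have hstep : cumWeight d T ≤ cumWeight d (T + 1) := by
      rw [cumWeight_succ]
      linarith [hd (T + 1) (by simp)]
    have ih := ih fun t ht => hd t (Icc_subset_Icc_right (by omega) ht)
    rw [sum_filter, sum_Icc_succ_top (by omega), ← sum_filter, Nat.add_sub_cancel]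
    split_ifs with hT
    · have hlog := sub_div_le_log_sub_log (hc.trans_le hT) hstep
      rw [cumWeight_succ, add_sub_cancel_left, ← cumWeight_succ] at hlog
      rw [max_eq_left hT] at ih
      rw [max_eq_left (hT.trans hstep)]
      linarith
    · have : log (max (cumWeight d T) c) ≤ log (max (cumWeight d (T + 1)) c) :=
        log_le_log (hc.trans_le (le_max_right _ _)) (max_le_max_right c hstep)
      linarith

lemma sum_filter_div_cumWeight_le_log (hd : ∀ t ∈ Icc 1 T, 0 ≤ d t ∧ d t ≤ c) (hc : 0 < c) :
    ∑ t ∈ Icc 1 T with c ≤ cumWeight d (t - 1), d t / cumWeight d t ≤ log T := by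
  refine (sum_filter_div_cumWeight_le (fun t ht => (hd t ht).1) hc).trans ?_
  rcases Nat.eq_zero_or_pos T with rfl | hT
  · simp [cumWeight_zero, hc.le]
  · have hmax : max (cumWeight d T) c ≤ T * c :=
      max_le (cumWeight_le_mul fun t ht => (hd t ht).2)
        (le_mul_of_one_le_left hc.le (by exact_mod_cast hT))
    calc log (max (cumWeight d T) c) - log c ≤ log (T * c) - log c := by
          gcongr
      _ = log T := by rw [log_mul (by positivity) hc.ne']; ring

/-- After burn-in the cumulative weight `D + x` at most doubles the previous one `D`. -/
lemma sq_div_le_two_mul_div {x D : ℝ} (hx : 0 ≤ x) (hxc : x ≤ c) (h : 2 * c < D + x) :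
    x ^ 2 / D ≤ 2 * c * (x / (D + x)) := by
  have hD : 0 < D := by linarith
  rw [div_le_iff₀ hD, mul_div_assoc', div_mul_eq_mul_div, le_div_iff₀ (by linarith)]
  nlinarith [mul_nonneg hx hx, mul_nonneg hx (sub_nonneg.2 hxc)]

lemma sum_filter_sq_div_cumWeight_le (hd : ∀ t ∈ Icc 1 T, 0 ≤ d t ∧ d t ≤ c) (hc : 0 ≤ c) :
    ∑ t ∈ Icc 1 T with 2 * c < cumWeight d t, d t ^ 2 / cumWeight d (t - 1)
      ≤ 2 * c * log T := by
  rcases hc.eq_or_lt with rfl | hc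
  · refine (sum_eq_zero fun t ht => ?_).le.trans_eq (by ring)
    have ht := (mem_filter.1 ht).1
    simp [le_antisymm (hd t ht).2 (hd t ht).1]
  have hsplit : ∀ t ∈ Icc 1 T, cumWeight d (t - 1) + d t = cumWeight d t :=
    fun t ht => cumWeight_sub_one_add d (mem_Icc.1 ht).1
  calc ∑ t ∈ Icc 1 T with 2 * c < cumWeight d t, d t ^ 2 / cumWeight d (t - 1)
      ≤ ∑ t ∈ Icc 1 T with 2 * c < cumWeight d t, 2 * c * (d t / cumWeight d t) := by
        refine sum_le_sum fun t ht => ?_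
        obtain ⟨ht, hpost⟩ := mem_filter.1 ht
        rw [← hsplit t ht] at hpost ⊢
        exact sq_div_le_two_mul_div (hd t ht).1 (hd t ht).2 hpost
    _ ≤ ∑ t ∈ Icc 1 T with c ≤ cumWeight d (t - 1), 2 * c * (d t / cumWeight d t) := by
        refine sum_le_sum_of_subset_of_nonneg (fun t ht => ?_) fun t ht _ => ?_
        · obtain ⟨ht, hpost⟩ := mem_filter.1 ht
          rw [← hsplit t ht] at hpost
          exact mem_filter.2 ⟨ht, by linarith [(hd t ht).2]⟩
        · obtain ⟨ht, hburn⟩ := mem_filter.1 ht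
          have hD : 0 ≤ cumWeight d t := by linarith [hsplit t ht, (hd t ht).1]
          exact mul_nonneg (by positivity) (div_nonneg (hd t ht).1 hD)
    _ = 2 * c * ∑ t ∈ Icc 1 T with c ≤ cumWeight d (t - 1), d t / cumWeight d t :=
        (mul_sum _ _ _).symm
    _ ≤ 2 * c * log T := by
        gcongr
        exact sum_filter_div_cumWeight_le_log hd hc

lemma sum_mul_le_sqrt_sum_sq_div_mul_sum_mul {ι : Type*} (s : Finset ι) {a w e : ι → ℝ}
    (hw : ∀ i ∈ s, 0 < w i) (he : ∀ i ∈ s, 0 ≤ e i ∧ e i ≤ 1) :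
    ∑ i ∈ s, a i * e i ≤ √((∑ i ∈ s, a i ^ 2 / w i) * ∑ i ∈ s, w i * e i) := by
  refine (le_abs_self _).trans (abs_le_sqrt ?_)
  refine sum_sq_le_sum_mul_sum_of_sq_le_mul _ (fun i hi => div_nonneg (sq_nonneg _) (hw i hi).le)
    (fun i hi => mul_nonneg (hw i hi).le (he i hi).1) fun i hi => ?_
  have hcancel : a i ^ 2 / w i * (w i * e i) = a i ^ 2 * e i := by
    field_simp [(hw i hi).ne']
  rw [hcancel, mul_pow]
  exact mul_le_mul_of_nonneg_left (pow_le_of_le_one (he i hi).1 (he i hi).2 two_ne_zero)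
    (sq_nonneg _)

variable {X : Type*} [Fintype X] {β : ℝ} {μ : X → ℝ} {d e : ℕ → X → ℝ}

lemma sum_burnin_le (hμ : ∀ x, 0 ≤ μ x) (hd : ∀ t ∈ Icc 1 T, ∀ x, 0 ≤ d t x)
    (he : ∀ t ∈ Icc 1 T, ∀ x, e t x ≤ 1) :
    ∑ x, ∑ t ∈ Icc 1 T with cumWeight (d · x) t ≤ 2 * μ x, d t x * e t x ≤ 2 * ∑ x, μ x := by
  rw [mul_sum]
  refine sum_le_sum fun x _ => ?_
  calc ∑ t ∈ Icc 1 T with cumWeight (d · x) t ≤ 2 * μ x, d t x * e t x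
      ≤ ∑ t ∈ Icc 1 T with cumWeight (d · x) t ≤ 2 * μ x, d t x :=
        sum_le_sum fun t ht => mul_le_of_le_one_right (hd t (mem_filter.1 ht).1 x)
          (he t (mem_filter.1 ht).1 x)
    _ ≤ 2 * μ x := sum_filter_cumWeight_le (fun t ht => hd t ht x) (by linarith [hμ x])

lemma sum_post_burnin_le (hμ : ∀ x, 0 ≤ μ x) (hd : ∀ t ∈ Icc 1 T, ∀ x, 0 ≤ d t x ∧ d t x ≤ μ x)
    (he : ∀ t ∈ Icc 1 T, ∀ x, 0 ≤ e t x ∧ e t x ≤ 1)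
    (hoff : ∀ t ∈ Icc 1 T, ∑ x, cumWeight (d · x) (t - 1) * e t x ≤ β) :
    ∑ x, ∑ t ∈ Icc 1 T with 2 * μ x < cumWeight (d · x) t, d t x * e t x
      ≤ √(2 * (∑ x, μ x) * log T * (T * β)) := by
  set post := univ.sigma fun x => {t ∈ Icc 1 T | 2 * μ x < cumWeight (d · x) t}
  have hpost : ∀ p ∈ post, p.2 ∈ Icc 1 T ∧ 0 < cumWeight (d · p.1) (p.2 - 1) := by
    intro p hp
    obtain ⟨ht, hlt⟩ := mem_filter.1 (mem_sigma.1 hp).2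
    have := cumWeight_sub_one_add (d · p.1) (mem_Icc.1 ht).1
    exact ⟨ht, by linarith [hd p.2 ht p.1, hμ p.1]⟩
  have hpotential : ∑ p ∈ post, d p.2 p.1 ^ 2 / cumWeight (d · p.1) (p.2 - 1)
      ≤ 2 * (∑ x, μ x) * log T := by
    rw [sum_sigma, mul_sum, sum_mul]
    exact sum_le_sum fun x _ => sum_filter_sq_div_cumWeight_le (fun t ht => hd t ht x) (hμ x)
  have hoffline : ∑ p ∈ post, cumWeight (d · p.1) (p.2 - 1) * e p.2 p.1 ≤ T * β :=
    calc ∑ p ∈ post, cumWeight (d · p.1) (p.2 - 1) * e p.2 p.1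
        ≤ ∑ x, ∑ t ∈ Icc 1 T, cumWeight (d · x) (t - 1) * e t x := by
          rw [sum_sigma]
          refine sum_le_sum fun x _ => sum_le_sum_of_subset_of_nonneg (filter_subset _ _)
            fun t ht _ => mul_nonneg (sum_nonneg fun τ hτ => (hd τ ?_ x).1) (he t ht x).1
          exact Icc_subset_Icc_right ((Nat.sub_le t 1).trans (mem_Icc.1 ht).2) hτ
      _ = ∑ t ∈ Icc 1 T, ∑ x, cumWeight (d · x) (t - 1) * e t x := sum_comm
      _ ≤ T * β := by simpa using sum_le_card_nsmul _ _ _ hoff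
  calc ∑ x, ∑ t ∈ Icc 1 T with 2 * μ x < cumWeight (d · x) t, d t x * e t x
      = ∑ p ∈ post, d p.2 p.1 * e p.2 p.1 :=
        (sum_sigma _ _ fun p : Σ _ : X, ℕ => d p.2 p.1 * e p.2 p.1).symm
    _ ≤ √((∑ p ∈ post, d p.2 p.1 ^ 2 / cumWeight (d · p.1) (p.2 - 1))
          * ∑ p ∈ post, cumWeight (d · p.1) (p.2 - 1) * e p.2 p.1) :=
        sum_mul_le_sqrt_sum_sq_div_mul_sum_mul post (fun p hp => (hpost p hp).2)
          fun p hp => he _ (hpost p hp).1 _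
    _ ≤ √(2 * (∑ x, μ x) * log T * (T * β)) := by
        refine sqrt_le_sqrt (mul_le_mul hpotential hoffline ?_ ?_)
        · exact sum_nonneg fun p hp => mul_nonneg (hpost p hp).2.le (he _ (hpost p hp).1 _).1
        · exact mul_nonneg (mul_nonneg zero_le_two (sum_nonneg fun x _ => hμ x))
            (log_natCast_nonneg T)

theorem sum_online_error_le_of_offline (hμ : ∀ x, 0 ≤ μ x)
    (hd : ∀ t ∈ Icc 1 T, ∀ x, 0 ≤ d t x ∧ d t x ≤ μ x)
    (he : ∀ t ∈ Icc 1 T, ∀ x, 0 ≤ e t x ∧ e t x ≤ 1)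
    (hoff : ∀ t ∈ Icc 1 T, ∑ x, cumWeight (d · x) (t - 1) * e t x ≤ β) :
    ∑ t ∈ Icc 1 T, ∑ x, d t x * e t x
      ≤ 2 * ∑ x, μ x + √(2 * (∑ x, μ x) * log T * (T * β)) := by
  have hsplit : ∑ t ∈ Icc 1 T, ∑ x, d t x * e t x
      = ∑ x, ∑ t ∈ Icc 1 T with cumWeight (d · x) t ≤ 2 * μ x, d t x * e t x
        + ∑ x, ∑ t ∈ Icc 1 T with 2 * μ x < cumWeight (d · x) t, d t x * e t x := by
    simp_rw [← not_le, ← sum_add_distrib, sum_filter_add_sum_filter_not]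
    exact sum_comm
  rw [hsplit]
  exact add_le_add (sum_burnin_le hμ (fun t ht x => (hd t ht x).1) fun t ht x => (he t ht x).2)
    (sum_post_burnin_le hμ hd he hoff)

end CumWeight

lemma sq_sub_le_one_of_mem_Icc {a b : ℝ} (ha : a ∈ Set.Icc 0 1) (hb : b ∈ Set.Icc 0 1) :
    (a - b) ^ 2 ≤ 1 :=
  (sq_le_one_iff_abs_le_one _).2 (abs_sub_le_of_nonneg_of_le ha.1 ha.2 hb.1 hb.2)

lemma Real.sqrt_le_two_mul_sqrt {a b : ℝ} (h : a ≤ 4 * b) : √a ≤ 2 * √b := by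
  calc √a ≤ √(2 ^ 2 * b) := Real.sqrt_le_sqrt (by linarith)
    _ = 2 * √b := by rw [Real.sqrt_mul (by positivity), Real.sqrt_sq zero_le_two]

/-- Offline-to-online conversion for contextual bandits: there is a
universal constant `c > 0` such that for every finite nonempty context set `S` and action set
`A`, context distribution `d₁`, true mean-reward function `g*` and estimates `ĝ^(t)` with
values in `[0,1]`, and randomized policies `π^(t)`, if the estimates satisfy the offline
guarantee with parameter `β` for the expected squared mean-reward error, then the cumulative
online estimation error is at most `c(√(|A|Tβ(1+log T)) + |A|)`. -/
theorem contextual_bandit_offline_to_online :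
    ∃ c : ℝ, 0 < c ∧
      ∀ (S A : Type) (_ : Fintype S) (_ : Nonempty S) (_ : Fintype A) (_ : Nonempty A),
      ∀ (d₁ : S → ℝ),
        (∀ s, 0 ≤ d₁ s) → (∑ s, d₁ s = 1) →
      ∀ (T : ℕ), 1 ≤ T → ∀ (β : ℝ), 0 ≤ β →
      ∀ (gstar : S → A → ℝ), (∀ s a, gstar s a ∈ Set.Icc (0 : ℝ) 1) →
      ∀ (ghat : ℕ → S → A → ℝ),
        (∀ t ∈ Finset.Icc 1 T, ∀ s a, ghat t s a ∈ Set.Icc (0 : ℝ) 1) →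
      ∀ (π : ℕ → S → A → ℝ),
        (∀ t ∈ Finset.Icc 1 T, ∀ s, (∀ a, 0 ≤ π t s a) ∧ ∑ a, π t s a = 1) →
        (∀ t ∈ Finset.Icc 1 T,
          ∑ τ ∈ Finset.Icc 1 (t - 1), ∑ s, d₁ s * ∑ a, π τ s a * (ghat t s a - gstar s a) ^ 2
            ≤ β) →
        ∑ t ∈ Finset.Icc 1 T, ∑ s, d₁ s * ∑ a, π t s a * (ghat t s a - gstar s a) ^ 2
          ≤ c * (Real.sqrt ((Fintype.card A) * T * β * (1 + Real.log T)) + Fintype.card A) := by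
  refine ⟨2, two_pos, ?_⟩
  intro S A _ _ _ _ d₁ hd₁ hd₁_sum T _ β hβ gstar hgstar ghat hghat π hπ hoff
  have hπ_le_one : ∀ t ∈ Icc 1 T, ∀ s a, π t s a ≤ 1 := fun t ht s a =>
    (single_le_sum (fun a _ => (hπ t ht s).1 a) (mem_univ a)).trans (hπ t ht s).2.le
  have hrewrite : ∀ t τ, ∑ s, d₁ s * ∑ a, π τ s a * (ghat t s a - gstar s a) ^ 2
      = ∑ x : S × A, d₁ x.1 * π τ x.1 x.2 * (ghat t x.1 x.2 - gstar x.1 x.2) ^ 2 := by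
    intro t τ
    simp only [Fintype.sum_prod_type, mul_sum, mul_assoc]
  have hcover : ∑ x : S × A, d₁ x.1 = Fintype.card A := by
    simp [Fintype.sum_prod_type, ← mul_sum, hd₁_sum]
  have key := sum_online_error_le_of_offline (X := S × A) (T := T) (β := β)
    (μ := fun x => d₁ x.1) (d := fun t x => d₁ x.1 * π t x.1 x.2)
    (e := fun t x => (ghat t x.1 x.2 - gstar x.1 x.2) ^ 2) (fun x => hd₁ x.1)
    (fun t ht x => ⟨mul_nonneg (hd₁ x.1) ((hπ t ht x.1).1 x.2),
      mul_le_of_le_one_right (hd₁ x.1) (hπ_le_one t ht x.1 x.2)⟩)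
    (fun t ht x => ⟨sq_nonneg _, sq_sub_le_one_of_mem_Icc (hghat t ht x.1 x.2) (hgstar x.1 x.2)⟩)
    (fun t ht => by
      simp only [cumWeight, sum_mul]
      rw [sum_comm]
      simpa only [hrewrite] using hoff t ht)
  simp only [hcover] at key
  simp only [hrewrite]
  refine key.trans ?_
  have hAβ : 0 ≤ (Fintype.card A : ℝ) * T * β := by positivity
  have hsqrt := Real.sqrt_le_two_mul_sqrt (a := 2 * Fintype.card A * Real.log T * (T * β))
    (b := Fintype.card A * T * β * (1 + Real.log T))
    (by nlinarith [mul_nonneg hAβ (Real.log_natCast_nonneg T)])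
  linarith
end

section
/- Let β > 0 be a real number and N ≥ 1 an integer with N·β > 1, and set T := N·⌊N·β⌋. Then there exist: a finite set S with |S| = N; the uniform distribution d₁ on S; an action set A = {a₀, a₁}; the true mean-reward function g* ≡ 0 on S × A; deterministic policies π^(1),…,π^(T) : S → A; and estimates ĝ^(1),…,ĝ^(T) : S × A → [0,1], such that: (offline guarantee) for every t ∈ {1,…,T}, ∑_{τ=1}^{t−1} (1/N) ∑_{s ∈ S} ( ĝ^(t)(s, π^(τ)(s)) − g*(s, π^(τ)(s)) )² ≤ β; and (online lower bound) ∑_{t=1}^{T} (1/N) ∑_{s ∈ S} ( ĝ^(t)(s, π^(t)(s)) − g*(s, π^(t)(s)) )² ≥ (1/2)·√(T·β). -/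
/-!
Contexts are visited cyclically, `s_t = t mod N`. The policy `π^(t)` plays `true` exactly at
`s_t`, and `ĝ^(t)` is the indicator of `(s_t, true)`. Then `ĝ^(t)` has error `1/N` under `π^(τ)`
when `s_τ = s_t` and `0` otherwise. Since `T = N⌊Nβ⌋`, each context recurs at most `⌊Nβ⌋` times,
so the offline error is at most `⌊Nβ⌋/N ≤ β`. The online error is `T/N = ⌊Nβ⌋`, and
`Tβ = ⌊Nβ⌋ · Nβ ≤ (2⌊Nβ⌋)²` because `Nβ < ⌊Nβ⌋ + 1 ≤ 2⌊Nβ⌋`.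
-/

open Finset

theorem card_filter_mod_eq_le {s : Finset ℕ} {N M : ℕ} (r : ℕ) (hs : ∀ i ∈ s, i < N * M) :
    #{i ∈ s | i % N = r} ≤ M := by
  calc #{i ∈ s | i % N = r} ≤ #(range M) := by
        refine card_le_card_of_injOn (· / N) (fun i hi ↦ ?_) fun i hi j hj hij ↦ ?_
        · simp only [coe_filter, Set.mem_ofPred_eq] at hi
          simpa using Nat.div_lt_of_lt_mul (hs i hi.1)
        · simp only [coe_filter, Set.mem_ofPred_eq] at hi hj
          simp only at hij
          rw [← Nat.mod_add_div i N, ← Nat.mod_add_div j N, hi.2, hj.2, hij]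
    _ = M := card_range M

theorem sqrt_floor_mul_le_two_mul_floor {x : ℝ} (hx : 1 ≤ x) : √(⌊x⌋₊ * x) ≤ 2 * ⌊x⌋₊ := by
  have h1 : (1 : ℝ) ≤ ⌊x⌋₊ := by exact_mod_cast Nat.one_le_floor_iff x |>.2 hx
  have h2 : x < ⌊x⌋₊ + 1 := Nat.lt_floor_add_one x
  rw [Real.sqrt_le_left (by positivity)]
  nlinarith

section CyclicSchedule

variable {N : ℕ}

def cyclicPolicy (t : ℕ) (s : Fin N) : Bool := decide (s.val = t % N)

def cyclicEstimate (t : ℕ) (s : Fin N) (a : Bool) : ℝ := if s.val = t % N ∧ a then 1 else 0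

theorem cyclicEstimate_mem_Icc (t : ℕ) (s : Fin N) (a : Bool) :
    cyclicEstimate t s a ∈ Set.Icc (0 : ℝ) 1 := by
  unfold cyclicEstimate; split_ifs <;> simp

theorem sum_cyclicEstimate_cyclicPolicy_sq (hN : 0 < N) (t τ : ℕ) :
    ∑ s : Fin N, cyclicEstimate t s (cyclicPolicy τ s) ^ 2 = if τ % N = t % N then 1 else 0 := by
  have summand (s : Fin N) : cyclicEstimate t s (cyclicPolicy τ s) ^ 2 =
      if s = ⟨t % N, Nat.mod_lt t hN⟩ then (if τ % N = t % N then 1 else 0) else 0 := by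
    by_cases hs : s.val = t % N <;> simp [cyclicEstimate, cyclicPolicy, Fin.ext_iff, hs, eq_comm]
  simp only [summand, sum_ite_eq', mem_univ, if_true]

end CyclicSchedule

theorem contextual_bandit_conversion_tightness_general
    (β : ℝ) (N : ℕ) (hN : 1 ≤ N) (hNβ : 1 < (N : ℝ) * β)
    (T : ℕ) (hT : T = N * Nat.floor ((N : ℝ) * β)) :
    ∃ (gstar : Fin N → Bool → ℝ) (π : ℕ → Fin N → Bool) (ghat : ℕ → Fin N → Bool → ℝ),
      (∀ s a, gstar s a = 0) ∧
      (∀ t ∈ Finset.Icc 1 T, ∀ s a, ghat t s a ∈ Set.Icc (0 : ℝ) 1) ∧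
      (∀ t ∈ Finset.Icc 1 T,
        ∑ τ ∈ Finset.Icc 1 (t - 1),
          (N : ℝ)⁻¹ * ∑ s, (ghat t s (π τ s) - gstar s (π τ s)) ^ 2 ≤ β) ∧
      (1 / 2 * Real.sqrt (T * β) ≤
        ∑ t ∈ Finset.Icc 1 T,
          (N : ℝ)⁻¹ * ∑ s, (ghat t s (π t s) - gstar s (π t s)) ^ 2) := by
  set M := ⌊(N : ℝ) * β⌋₊
  have hNR : (0 : ℝ) < N := by exact_mod_cast hN
  refine ⟨fun _ _ ↦ 0, cyclicPolicy, cyclicEstimate, fun _ _ ↦ rfl,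
    fun t _ ↦ cyclicEstimate_mem_Icc t, fun t ht ↦ ?_, ?_⟩
  · simp only [sub_zero, sum_cyclicEstimate_cyclicPolicy_sq hN, ← mul_sum, sum_boole]
    have hcount : #{τ ∈ Icc 1 (t - 1) | τ % N = t % N} ≤ M :=
      card_filter_mod_eq_le _ fun τ hτ ↦ by
        rw [mem_Icc] at ht hτ; omega
    calc (N : ℝ)⁻¹ * #{τ ∈ Icc 1 (t - 1) | τ % N = t % N}
        ≤ (N : ℝ)⁻¹ * M := by gcongr
      _ ≤ β := by
        rw [inv_mul_le_iff₀ hNR]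
        exact Nat.floor_le (zero_le_one.trans hNβ.le)
  · simp only [sub_zero, sum_cyclicEstimate_cyclicPolicy_sq hN, ↓reduceIte]
    have hsum : ∑ t ∈ Icc 1 T, (N : ℝ)⁻¹ * 1 = M := by
      rw [sum_const, Nat.card_Icc, hT, nsmul_eq_mul]
      push_cast
      field_simp
    have hsqrt : √(T * β) ≤ 2 * M := by
      rw [show (T : ℝ) * β = M * (N * β) by rw [hT]; push_cast; ring]
      exact sqrt_floor_mul_le_two_mul_floor hNβ.le
    linarith

/-- Tightness of offline-to-online conversion for contextual bandits.  For
`β > 0` and `N ≥ 1` with `N·β > 1` and `T = N·⌊N·β⌋`, there exist (taking the context set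
`S = Fin N` of size `N`, the uniform context distribution, the two-action set `A = Bool`, and
the zero mean-reward function `g* ≡ 0`) deterministic policies `π^(t) : S → A` and estimates
`ĝ^(t) : S → A → [0,1]` satisfying the offline guarantee with parameter `β` whose online
estimation error is at least `(1/2)·√(T·β)`. -/
theorem contextual_bandit_conversion_tightness
    (β : ℝ) (hβ : 0 < β) (N : ℕ) (hN : 1 ≤ N) (hNβ : 1 < (N : ℝ) * β)
    (T : ℕ) (hT : T = N * Nat.floor ((N : ℝ) * β)) :
    ∃ (gstar : Fin N → Bool → ℝ) (π : ℕ → Fin N → Bool) (ghat : ℕ → Fin N → Bool → ℝ),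
      (∀ s a, gstar s a = 0) ∧
      (∀ t ∈ Finset.Icc 1 T, ∀ s a, ghat t s a ∈ Set.Icc (0 : ℝ) 1) ∧
      (∀ t ∈ Finset.Icc 1 T,
        ∑ τ ∈ Finset.Icc 1 (t - 1),
          (N : ℝ)⁻¹ * ∑ s, (ghat t s (π τ s) - gstar s (π τ s)) ^ 2 ≤ β) ∧
      (1 / 2 * Real.sqrt (T * β) ≤
        ∑ t ∈ Finset.Icc 1 T,
          (N : ℝ)⁻¹ * ∑ s, (ghat t s (π t s) - gstar s (π t s)) ^ 2) :=
  contextual_bandit_conversion_tightness_general β N hN hNβ T hT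
end
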